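/- arXiv:2503.17160 — 2 statements merged into one kernel-verified Lean document; each statement's English description precedes it below -/
import Mathlib

section
/- In a partial cube, a path P is a geodesic if and only if no two distinct edges of P are in the Djoković–Winkler relation Θ. In particular, two adjacent edges of a partial cube are never in relation Θ. -/
open SimpleGraph

/-- The hypercube graph `Q_n` on vertex set `{0,1}^n`. -/
def cubeGraph (n : ℕ) : SimpleGraph (Fin n → Bool) where
  Adj a b := (Finset.univ.filter fun i => a i ≠ b i).card = 1
  symm := by
    constructor
    intro a b h
    have hset : (Finset.univ.filter fun i => b i ≠ a i) =
        (Finset.univ.filter fun i => a i ≠ b i) := by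
      apply Finset.filter_congr; intro i _; exact ne_comm
    rw [hset]; exact h
  loopless := by constructor; intro a h; simp at h

/-- The simplex graph `S(G)`: vertices are the cliques of `G` (including `∅`),
two cliques adjacent iff they differ in exactly one vertex. -/
noncomputable def simplexGraph {V : Type*} (G : SimpleGraph V) :
    SimpleGraph {s : Finset V // G.IsClique (↑s : Set V)} := by
  classical
  exact
    { Adj := fun a b => (symmDiff a.1 b.1).card = 1
      symm := by constructor; intro a b h; rwa [symmDiff_comm]
      loopless := by constructor; intro a h; simp [symmDiff_self] at h }

/-- A median graph: connected and every triple of vertices has a unique median. -/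
def IsMedianGraph {V : Type*} (G : SimpleGraph V) : Prop :=
  G.Connected ∧ ∀ u v w : V, ∃! x : V,
    G.dist u x + G.dist x v = G.dist u v ∧
    G.dist u x + G.dist x w = G.dist u w ∧
    G.dist v x + G.dist x w = G.dist v w

/-- `f` is an isometric embedding of `G` into the hypercube `Q_n`
(injective, induced, and distance preserving). -/
def IsIsometricEmbedding {V : Type*} (G : SimpleGraph V) (n : ℕ) (f : V → Fin n → Bool) : Prop :=
  Function.Injective f ∧
    (∀ u v, G.Adj u v ↔ (cubeGraph n).Adj (f u) (f v)) ∧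
    (∀ u v, G.dist u v = (cubeGraph n).dist (f u) (f v))

/-- A partial cube: a graph isomorphic to an isometric subgraph of a hypercube. -/
def IsPartialCube {V : Type*} (G : SimpleGraph V) : Prop :=
  ∃ n f, IsIsometricEmbedding G n f

/-- A daisy cube: an isometric subgraph of a hypercube whose vertex set is
downward closed for the coordinatewise order. -/
def IsDaisyCube {V : Type*} (G : SimpleGraph V) : Prop :=
  ∃ n f, IsIsometricEmbedding G n f ∧
    ∀ (u : V) (b : Fin n → Bool), (∀ i, b i ≤ f u i) → ∃ w, f w = b

/-- The isometric dimension of `G`. -/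
noncomputable def idim {V : Type*} (G : SimpleGraph V) : ℕ :=
  sInf {n | ∃ f, IsIsometricEmbedding G n f}

/-- The Djoković–Winkler relation `Θ` on (unordered) edges. -/
def ThetaE {V : Type*} (G : SimpleGraph V) (e f : Sym2 V) : Prop :=
  ∃ u v x y, e = s(u, v) ∧ f = s(x, y) ∧
    G.dist u x + G.dist v y ≠ G.dist u y + G.dist v x

/-- The halfspace `W_{uv}`. -/
def Wset {V : Type*} (G : SimpleGraph V) (u v : V) : Set V :=
  {w | G.dist u w < G.dist v w}

/-- The set `U_{uv}` of vertices of `W_{uv}` incident with an edge of `F_{uv}`. -/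
def Uset {V : Type*} (G : SimpleGraph V) (u v : V) : Set V :=
  {w | w ∈ Wset G u v ∧ ∃ b ∈ Wset G v u, G.Adj w b}

/-- The Θ-classes of the edges `uv` and `xy` cross: all four intersections of
halfspaces are nonempty. -/
def Cross {V : Type*} (G : SimpleGraph V) (u v x y : V) : Prop :=
  (Wset G u v ∩ Wset G x y).Nonempty ∧ (Wset G u v ∩ Wset G y x).Nonempty ∧
  (Wset G v u ∩ Wset G x y).Nonempty ∧ (Wset G v u ∩ Wset G y x).Nonempty

/-- A set of vertices is convex if it contains every geodesic between its points. -/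
def ConvexSet {V : Type*} (G : SimpleGraph V) (S : Set V) : Prop :=
  ∀ u ∈ S, ∀ v ∈ S, ∀ p : G.Walk u v, p.length = G.dist u v → ∀ w ∈ p.support, w ∈ S

/-- The cycle graph on `ZMod m` (for `m ≥ 3`). -/
def cycG (m : ℕ) : SimpleGraph (ZMod m) where
  Adj i j := i ≠ j ∧ (j = i + 1 ∨ i = j + 1)
  symm := by constructor; rintro i j ⟨h, h'⟩; exact ⟨h.symm, h'.symm⟩
  loopless := by constructor; rintro i ⟨h, _⟩; exact h rfl

/-!
Fix an isometric embedding `f` of `G` into `Q_n`. Distances in `G` are Hamming distances of the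
images, and every edge of `G` flips exactly one coordinate. Writing
`d(u,x) + d(v,y) - d(u,y) - d(v,x)` as a sum over coordinates, only a coordinate flipped by both
edges contributes, so `uv Θ xy` iff the two edges flip the same coordinate. Along a walk from `a`
to `b`, `f a` and `f b` differ exactly in the coordinates flipped an odd number of times, so the
Hamming distance is at most the length, with equality iff no coordinate is flipped twice. Two
adjacent edges `xy`, `yz` flipping the same coordinate would force `f x = f z`.
-/

open Finset

def fourPoint (x y z w : Bool) : ℤ :=
  (if x ≠ z then 1 else 0) + (if y ≠ w then 1 else 0) -
    ((if x ≠ w then 1 else 0) + (if y ≠ z then 1 else 0))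

lemma fourPoint_of_eq_left {x z w : Bool} : fourPoint x x z w = 0 := by
  cases x <;> cases z <;> cases w <;> decide

lemma fourPoint_of_eq_right {x y z : Bool} : fourPoint x y z z = 0 := by
  cases x <;> cases y <;> cases z <;> decide

lemma fourPoint_ne_zero {x y z w : Bool} (hxy : x ≠ y) (hzw : z ≠ w) :
    fourPoint x y z w ≠ 0 := by
  cases x <;> cases y <;> cases z <;> cases w <;> simp_all [fourPoint]

lemma hammingDist_fourPoint {ι : Type*} [Fintype ι] (a b c d : ι → Bool) :
    ((hammingDist a c + hammingDist b d : ℕ) : ℤ) - (hammingDist a d + hammingDist b c : ℕ) =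
      ∑ k, fourPoint (a k) (b k) (c k) (d k) := by
  simp only [hammingDist, card_filter, fourPoint, sum_sub_distrib, sum_add_distrib]
  push_cast
  rfl

section Cube

variable {n : ℕ}

-- On an edge of the cube this is the singleton of the flipped coordinate.
def diffCoords : Sym2 (Fin n → Bool) → Finset (Fin n) :=
  Sym2.lift ⟨fun a b => {i | a i ≠ b i}, fun a b => by simp_rw [ne_comm]⟩

@[simp]
lemma mem_diffCoords_mk {a b : Fin n → Bool} {i : Fin n} :
    i ∈ diffCoords s(a, b) ↔ a i ≠ b i := by
  simp [diffCoords]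

lemma card_diffCoords_mk (a b : Fin n → Bool) : #(diffCoords s(a, b)) = hammingDist a b := rfl

lemma cubeGraph_adj_iff_exists {a b : Fin n → Bool} :
    (cubeGraph n).Adj a b ↔ ∃ i, diffCoords s(a, b) = {i} :=
  card_eq_one

lemma diffCoords_eq_singleton_iff {a b : Fin n → Bool} (h : (cubeGraph n).Adj a b) {i : Fin n} :
    diffCoords s(a, b) = {i} ↔ a i ≠ b i := by
  obtain ⟨j, hj⟩ := cubeGraph_adj_iff_exists.mp h
  rw [← mem_diffCoords_mk, hj, mem_singleton, singleton_inj, eq_comm]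

lemma eq_of_diffCoords_eq {a b c : Fin n → Bool} (h : diffCoords s(a, b) = diffCoords s(b, c)) :
    a = c := by
  funext i
  have hi := congrArg (i ∈ ·) h
  simp only [mem_diffCoords_mk, eq_iff_iff] at hi
  revert hi
  cases a i <;> cases b i <;> cases c i <;> simp

lemma exists_walk_length_eq_hammingDist (a b : Fin n → Bool) :
    ∃ w : (cubeGraph n).Walk a b, w.length = hammingDist a b := by
  induction h : hammingDist a b generalizing a with
  | zero =>
    obtain rfl := hammingDist_eq_zero.mp h
    exact ⟨.nil, rfl⟩
  | succ m ih =>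
    obtain ⟨i, hi⟩ : ∃ i, a i ≠ b i := by
      by_contra! hab
      simp [funext hab] at h
    set a' := Function.update a i (b i)
    have hadj : (cubeGraph n).Adj a a' := by
      refine cubeGraph_adj_iff_exists.mpr ⟨i, ext fun k => ?_⟩
      rcases eq_or_ne k i with rfl | hk <;> simp [a', *]
    have hdist : hammingDist a' b = m := by
      have : diffCoords s(a', b) = (diffCoords s(a, b)).erase i := by
        ext k
        rcases eq_or_ne k i with rfl | hk <;> simp [a', *]
      rw [← card_diffCoords_mk, this, card_erase_of_mem (by simpa using hi), card_diffCoords_mk,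
        h, Nat.add_sub_cancel]
    obtain ⟨w, hw⟩ := ih a' hdist
    exact ⟨.cons hadj w, by simp [hw]⟩

namespace SimpleGraph.Walk

variable {a b : Fin n → Bool} (w : (cubeGraph n).Walk a b)

lemma ne_iff_odd_count_diffCoords (i : Fin n) :
    a i ≠ b i ↔ Odd ((w.edges.map diffCoords).count {i}) := by
  induction w with
  | nil => simp
  | @cons a c b h w ih =>
    simp only [edges_cons, List.map_cons, List.count_cons, beq_iff_eq,
      diffCoords_eq_singleton_iff h]
    split_ifs with hac <;> simp only [Nat.odd_add_one, add_zero, ← ih] <;> revert hac <;>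
      cases a i <;> cases b i <;> cases c i <;> simp

lemma exists_eq_singleton_of_mem_map_diffCoords {s : Finset (Fin n)}
    (hs : s ∈ w.edges.map diffCoords) : ∃ i, s = {i} := by
  obtain ⟨e, he, rfl⟩ := List.mem_map.mp hs
  induction e using Sym2.ind with
  | _ u v => exact cubeGraph_adj_iff_exists.mp (w.adj_of_mem_edges he)

lemma hammingDist_le_card_toFinset :
    hammingDist a b ≤ #(w.edges.map diffCoords).toFinset := by
  refine card_le_card_of_injOn (fun i : Fin n => ({i} : Finset (Fin n))) (fun i hi => ?_)
    (fun i _ j _ h => singleton_injective h)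
  have hodd := (w.ne_iff_odd_count_diffCoords i).mp (by simpa using hi)
  simpa using List.count_pos_iff.mp hodd.pos

lemma hammingDist_le_length : hammingDist a b ≤ w.length :=
  calc hammingDist a b ≤ #(w.edges.map diffCoords).toFinset := w.hammingDist_le_card_toFinset
    _ ≤ (w.edges.map diffCoords).length := List.toFinset_card_le _
    _ = w.length := by simp

lemma hammingDist_eq_length_iff_nodup :
    hammingDist a b = w.length ↔ (w.edges.map diffCoords).Nodup := by
  have hlen : (w.edges.map diffCoords).length = w.length := by simp
  constructor
  · intro h
    rw [← Multiset.coe_nodup, ← Multiset.toFinset_card_eq_card_iff_nodup, List.toFinset_coe,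
      Multiset.coe_card]
    have := w.hammingDist_le_card_toFinset
    have := (w.edges.map diffCoords).toFinset_card_le
    omega
  · intro hnd
    refine le_antisymm w.hammingDist_le_length ?_
    rw [← hlen, ← List.toFinset_card_of_nodup hnd]
    refine card_le_card_of_surjOn (fun i : Fin n => ({i} : Finset (Fin n))) fun s hs => ?_
    have hs : s ∈ w.edges.map diffCoords := by simpa using hs
    obtain ⟨i, rfl⟩ := w.exists_eq_singleton_of_mem_map_diffCoords hs
    have hcount : (w.edges.map diffCoords).count {i} = 1 :=
      le_antisymm (List.nodup_iff_count_le_one.mp hnd _) (List.count_pos_iff.mpr hs)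
    refine ⟨i, ?_, rfl⟩
    simp [w.ne_iff_odd_count_diffCoords, hcount]

end SimpleGraph.Walk

lemma cubeGraph_dist (a b : Fin n → Bool) : (cubeGraph n).dist a b = hammingDist a b := by
  obtain ⟨w, hw⟩ := exists_walk_length_eq_hammingDist a b
  refine le_antisymm (hw ▸ dist_le w) ?_
  obtain ⟨w', hw'⟩ := Reachable.exists_walk_length_eq_dist ⟨w⟩
  exact hw' ▸ w'.hammingDist_le_length

lemma hammingDist_add_ne_iff {a b c d : Fin n → Bool} (hab : (cubeGraph n).Adj a b)
    (hcd : (cubeGraph n).Adj c d) :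
    hammingDist a c + hammingDist b d ≠ hammingDist a d + hammingDist b c ↔
      diffCoords s(a, b) = diffCoords s(c, d) := by
  obtain ⟨i, hi⟩ := cubeGraph_adj_iff_exists.mp hab
  obtain ⟨j, hj⟩ := cubeGraph_adj_iff_exists.mp hcd
  have hab' (k) : a k ≠ b k ↔ k = i := by rw [← mem_diffCoords_mk, hi, mem_singleton]
  have hcd' (k) : c k ≠ d k ↔ k = j := by rw [← mem_diffCoords_mk, hj, mem_singleton]
  have hsum : ((hammingDist a c + hammingDist b d : ℕ) : ℤ) -
      (hammingDist a d + hammingDist b c : ℕ) = fourPoint (a i) (b i) (c i) (d i) := by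
    rw [hammingDist_fourPoint, sum_eq_single i (fun k _ hk => ?_) (by simp)]
    rw [not_ne_iff.mp ((hab' k).not.mpr hk), fourPoint_of_eq_left]
  rw [Ne, ← Nat.cast_inj (R := ℤ), ← sub_eq_zero, hsum, hi, hj, singleton_inj]
  constructor
  · intro h
    by_contra hij
    exact h (by rw [not_ne_iff.mp ((hcd' i).not.mpr hij), fourPoint_of_eq_right])
  · rintro rfl
    exact fourPoint_ne_zero ((hab' i).mpr rfl) ((hcd' i).mpr rfl)

end Cube

lemma thetaE_mk_iff {V : Type*} {G : SimpleGraph V} {u v x y : V} :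
    ThetaE G s(u, v) s(x, y) ↔ G.dist u x + G.dist v y ≠ G.dist u y + G.dist v x := by
  refine ⟨?_, fun h => ⟨u, v, x, y, rfl, rfl, h⟩⟩
  rintro ⟨u', v', x', y', huv, hxy, hne⟩
  rcases Sym2.eq_iff.mp huv with ⟨rfl, rfl⟩ | ⟨rfl, rfl⟩ <;>
    rcases Sym2.eq_iff.mp hxy with ⟨rfl, rfl⟩ | ⟨rfl, rfl⟩ <;> omega

namespace IsIsometricEmbedding

variable {V : Type*} {G : SimpleGraph V} {n : ℕ} {f : V → Fin n → Bool}
  (hf : IsIsometricEmbedding G n f)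
include hf

lemma dist_eq_hammingDist (u v : V) : G.dist u v = hammingDist (f u) (f v) :=
  (hf.2.2 u v).trans (cubeGraph_dist _ _)

def toHom : G →g cubeGraph n := ⟨f, (hf.2.1 _ _).mp⟩

lemma thetaE_iff {e e' : Sym2 V} (he : e ∈ G.edgeSet) (he' : e' ∈ G.edgeSet) :
    ThetaE G e e' ↔ diffCoords (e.map f) = diffCoords (e'.map f) := by
  induction e using Sym2.ind with | _ u v =>
  induction e' using Sym2.ind with | _ x y =>
  rw [thetaE_mk_iff, Sym2.map_mk, Sym2.map_mk,
    ← hammingDist_add_ne_iff ((hf.2.1 u v).mp he) ((hf.2.1 x y).mp he')]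
  simp only [hf.dist_eq_hammingDist]

lemma length_eq_dist_iff {a b : V} (p : G.Walk a b) :
    p.length = G.dist a b ↔ (p.edges.map (diffCoords ∘ Sym2.map f)).Nodup := by
  have h := (p.map hf.toHom).hammingDist_eq_length_iff_nodup
  rw [Walk.length_map, Walk.edges_map, List.map_map] at h
  rw [hf.dist_eq_hammingDist, eq_comm]
  exact h

end IsIsometricEmbedding

/-- In a partial cube, a path is a geodesic iff no two distinct edges of it are in
relation `Θ`; in particular two adjacent edges are never in relation `Θ`. -/
theorem stmt4 {V : Type*} (G : SimpleGraph V) (hG : IsPartialCube G)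
    {a b : V} (p : G.Walk a b) (hp : p.IsPath) :
    (p.length = G.dist a b ↔
      ∀ e ∈ p.edges, ∀ f ∈ p.edges, e ≠ f → ¬ ThetaE G e f) ∧
    (∀ x y z : V, G.Adj x y → G.Adj y z → x ≠ z → ¬ ThetaE G s(x, y) s(y, z)) := by
  obtain ⟨n, f, hf⟩ := hG
  refine ⟨?_, fun x y z hxy hyz hxz hθ =>
    hxz (hf.1 (eq_of_diffCoords_eq ((hf.thetaE_iff hxy hyz).mp hθ)))⟩
  rw [hf.length_eq_dist_iff, List.nodup_map_iff_inj_on hp.edges_nodup]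
  refine forall₂_congr fun e he => forall₂_congr fun e' he' => ?_
  rw [Function.comp_apply, Function.comp_apply,
    ← hf.thetaE_iff (p.edges_subset_edgeSet he) (p.edges_subset_edgeSet he'), not_imp_not]
end

section
/- For any finite graph G, the crossing graph of the simplex graph satisfies (S(G))^# ≅ G. -/
open SimpleGraph

/-- The Θ-class of the edge `uv`, as a set of edges. -/
def thetaClass {V : Type*} (G : SimpleGraph V) (u v : V) : Set (Sym2 V) :=
  {e | e ∈ G.edgeSet ∧ ThetaE G s(u, v) e}

/-- The crossing graph of a partial cube: vertices are the Θ-classes, two classes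
adjacent iff they cross. -/
def crossingGraph {V : Type*} (G : SimpleGraph V) :
    SimpleGraph {C : Set (Sym2 V) // ∃ u v, G.Adj u v ∧ C = thetaClass G u v} :=
  SimpleGraph.fromRel fun C D => ∃ u v x y, G.Adj u v ∧ G.Adj x y ∧
    C.1 = thetaClass G u v ∧ D.1 = thetaClass G x y ∧ Cross G u v x y

/-!
The distance between two cliques in `S(G)` is the size of their symmetric difference, so every
edge `ab` of `S(G)` carries a label `v` with `a ∆ b = {v}`, two edges are in relation `Θ` exactly
when their labels agree, and the halfspace `W_ab` consists of the cliques that agree with `a` at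
`v`. Thus the `Θ`-classes correspond to the vertices of `G`. The classes of `v ≠ w` always meet in
the quadrants realised by `∅`, `{v}` and `{w}`; the fourth quadrant needs a clique containing both
`v` and `w`, which exists iff `v` and `w` are adjacent.
-/

open symmDiff

namespace Finset

variable {α : Type*} [DecidableEq α]

lemma symmDiff_singleton_of_mem {s : Finset α} {a : α} (h : a ∈ s) : s ∆ {a} = s.erase a := by
  ext x
  by_cases hx : x = a <;> simp [mem_symmDiff, hx, h]

lemma symmDiff_singleton_of_notMem {s : Finset α} {a : α} (h : a ∉ s) :
    s ∆ {a} = insert a s := by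
  ext x
  by_cases hx : x = a <;> simp [mem_symmDiff, hx, h]

lemma card_symmDiff_singleton (s : Finset α) (a : α) :
    ((s ∆ {a}).card : ℤ) = s.card + if a ∈ s then -1 else 1 := by
  by_cases h : a ∈ s
  · rw [symmDiff_singleton_of_mem h, card_erase_of_mem h, if_pos h,
      Nat.cast_sub (card_pos.2 ⟨a, h⟩)]
    ring
  · rw [symmDiff_singleton_of_notMem h, card_insert_of_notMem h, if_neg h]
    push_cast
    ring

lemma card_symmDiff_le_add (s t u : Finset α) :
    (s ∆ u).card ≤ (s ∆ t).card + (t ∆ u).card :=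
  (card_le_card (symmDiff_triangle s t u)).trans (card_union_le _ _)

end Finset

section SimplexGraph

open scoped Classical

variable {V : Type*} {G : SimpleGraph V}

abbrev SimplexVertex (G : SimpleGraph V) := {s : Finset V // G.IsClique (s : Set V)}

def emptyClique (G : SimpleGraph V) : SimplexVertex G := ⟨∅, by simp⟩

def singletonClique (G : SimpleGraph V) (v : V) : SimplexVertex G := ⟨{v}, by simp⟩

lemma simplexGraph_adj {a b : SimplexVertex G} :
    (simplexGraph G).Adj a b ↔ (a.1 ∆ b.1).card = 1 :=
  Iff.rfl

lemma simplexGraph_adj_iff_exists {a b : SimplexVertex G} :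
    (simplexGraph G).Adj a b ↔ ∃ v, a.1 ∆ b.1 = {v} :=
  Finset.card_eq_one

lemma symmDiff_emptyClique (v : V) :
    (emptyClique G).1 ∆ (singletonClique G v).1 = {v} :=
  bot_symmDiff _

lemma simplexGraph_adj_emptyClique (v : V) :
    (simplexGraph G).Adj (emptyClique G) (singletonClique G v) :=
  simplexGraph_adj_iff_exists.2 ⟨v, symmDiff_emptyClique v⟩

lemma exists_mem_symmDiff_isClique {a b : SimplexVertex G} (hab : a ≠ b) :
    ∃ v ∈ a.1 ∆ b.1, G.IsClique ((a.1 ∆ {v} : Finset V) : Set V) := by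
  by_cases h : (a.1 \ b.1).Nonempty
  · obtain ⟨v, hv⟩ := h
    have hva := (Finset.mem_sdiff.1 hv).1
    refine ⟨v, Finset.symmDiff_subset_sdiff hv, a.2.subset ?_⟩
    rw [Finset.symmDiff_singleton_of_mem hva]
    exact Finset.coe_subset.2 (Finset.erase_subset v a.1)
  · have hab' : a.1 ⊆ b.1 :=
      Finset.sdiff_eq_empty_iff_subset.1 (Finset.not_nonempty_iff_eq_empty.1 h)
    obtain ⟨v, hv⟩ : (b.1 \ a.1).Nonempty := by
      rw [Finset.sdiff_nonempty]
      exact fun hba => hab (Subtype.ext (hab'.antisymm hba))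
    have hva := (Finset.mem_sdiff.1 hv).2
    refine ⟨v, Finset.symmDiff_subset_sdiff' hv, b.2.subset ?_⟩
    rw [Finset.symmDiff_singleton_of_notMem hva]
    exact Finset.coe_subset.2 (Finset.insert_subset (Finset.mem_sdiff.1 hv).1 hab')

lemma exists_walk_length_eq_card_symmDiff :
    ∀ (n : ℕ) (a b : SimplexVertex G), (a.1 ∆ b.1).card = n →
      ∃ p : (simplexGraph G).Walk a b, p.length = n
  | 0, a, b, h => by
    obtain rfl : a = b := Subtype.ext (Finset.symmDiff_eq_empty.1 (Finset.card_eq_zero.1 h))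
    exact ⟨.nil, rfl⟩
  | n + 1, a, b, h => by
    have hab : a ≠ b := by
      rintro rfl
      simp at h
    obtain ⟨v, hv, hc⟩ := exists_mem_symmDiff_isClique hab
    let c : SimplexVertex G := ⟨a.1 ∆ {v}, hc⟩
    have hac : (simplexGraph G).Adj a c := by
      simp [simplexGraph_adj, c, symmDiff_symmDiff_cancel_left]
    have hcb : (c.1 ∆ b.1).card = n := by
      rw [symmDiff_right_comm, Finset.symmDiff_singleton_of_mem hv, Finset.card_erase_of_mem hv,
        h, Nat.add_sub_cancel]
    obtain ⟨p, hp⟩ := exists_walk_length_eq_card_symmDiff n c b hcb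
    exact ⟨.cons hac p, by simp [hp]⟩

lemma card_symmDiff_le_length {a b : SimplexVertex G} (p : (simplexGraph G).Walk a b) :
    (a.1 ∆ b.1).card ≤ p.length := by
  induction p with
  | nil => simp
  | @cons a c b hac _ ih =>
    have := Finset.card_symmDiff_le_add a.1 c.1 b.1
    rw [simplexGraph_adj.1 hac] at this
    simp only [Walk.length_cons]
    omega

lemma simplexGraph_dist (a b : SimplexVertex G) :
    (simplexGraph G).dist a b = (a.1 ∆ b.1).card := by
  obtain ⟨p, hp⟩ := exists_walk_length_eq_card_symmDiff _ a b rfl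
  obtain ⟨q, hq⟩ := Reachable.exists_walk_length_eq_dist ⟨p⟩
  exact le_antisymm (hp ▸ dist_le p) (hq ▸ card_symmDiff_le_length q)

lemma simplexGraph_dist_add_dist_ne_iff {a b c d : SimplexVertex G} {v w : V}
    (hv : a.1 ∆ b.1 = {v}) (hw : c.1 ∆ d.1 = {w}) :
    (simplexGraph G).dist a c + (simplexGraph G).dist b d ≠
      (simplexGraph G).dist a d + (simplexGraph G).dist b c ↔ v = w := by
  have hb : b.1 = a.1 ∆ {v} := by rw [← hv, symmDiff_symmDiff_cancel_left]
  have hd : d.1 = c.1 ∆ {w} := by rw [← hw, symmDiff_symmDiff_cancel_left]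
  have hbd : b.1 ∆ d.1 = a.1 ∆ c.1 ∆ {v} ∆ {w} := by rw [hb, hd]; ac_rfl
  have had : a.1 ∆ d.1 = a.1 ∆ c.1 ∆ {w} := by rw [hd, symmDiff_assoc]
  have hbc : b.1 ∆ c.1 = a.1 ∆ c.1 ∆ {v} := by rw [hb, symmDiff_right_comm]
  simp only [simplexGraph_dist, hbd, had, hbc, Ne, ← Nat.cast_inj (R := ℤ), Nat.cast_add,
    Finset.card_symmDiff_singleton, Finset.mem_symmDiff, Finset.mem_singleton]
  rcases eq_or_ne v w with rfl | hvw <;> split_ifs <;> simp_all <;> omega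

lemma thetaE_simplexGraph_iff {a b c d : SimplexVertex G} {v w : V} (hv : a.1 ∆ b.1 = {v})
    (hw : c.1 ∆ d.1 = {w}) :
    ThetaE (simplexGraph G) s(a, b) s(c, d) ↔ v = w := by
  rw [← simplexGraph_dist_add_dist_ne_iff hv hw]
  constructor
  · rintro ⟨a', b', c', d', hab, hcd, hne⟩
    rcases Sym2.eq_iff.1 hab with ⟨rfl, rfl⟩ | ⟨rfl, rfl⟩ <;>
      rcases Sym2.eq_iff.1 hcd with ⟨rfl, rfl⟩ | ⟨rfl, rfl⟩ <;> omega
  · exact fun h => ⟨a, b, c, d, rfl, rfl, h⟩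

lemma thetaClass_simplexGraph_eq_iff {a b c d : SimplexVertex G} {v w : V}
    (hv : a.1 ∆ b.1 = {v}) (hw : c.1 ∆ d.1 = {w}) :
    thetaClass (simplexGraph G) a b = thetaClass (simplexGraph G) c d ↔ v = w := by
  constructor
  · intro h
    have hab : s(a, b) ∈ thetaClass (simplexGraph G) a b :=
      ⟨simplexGraph_adj_iff_exists.2 ⟨v, hv⟩, (thetaE_simplexGraph_iff hv hv).2 rfl⟩
    exact ((thetaE_simplexGraph_iff hw hv).1 (h ▸ hab).2).symm
  · rintro rfl
    ext e
    induction e using Sym2.ind with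
    | h x y =>
      simp only [thetaClass, Set.mem_ofPred_eq, mem_edgeSet]
      refine and_congr_right fun hxy => ?_
      obtain ⟨u, hu⟩ := simplexGraph_adj_iff_exists.1 hxy
      rw [thetaE_simplexGraph_iff hv hu, thetaE_simplexGraph_iff hw hu]

lemma wset_simplexGraph {a b : SimplexVertex G} {v : V} (hv : a.1 ∆ b.1 = {v}) :
    Wset (simplexGraph G) a b = {t | v ∈ t.1 ↔ v ∈ a.1} := by
  ext t
  have hb : b.1 ∆ t.1 = a.1 ∆ t.1 ∆ {v} := by
    rw [← hv, symmDiff_right_comm, symmDiff_symmDiff_cancel_left]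
  simp only [Wset, Set.mem_ofPred_eq, simplexGraph_dist, hb, ← Nat.cast_lt (α := ℤ),
    Finset.card_symmDiff_singleton, Finset.mem_symmDiff]
  split_ifs <;> simp_all <;> tauto

lemma adj_of_cross_simplexGraph {a b c d : SimplexVertex G} {v w : V} (hv : a.1 ∆ b.1 = {v})
    (hw : c.1 ∆ d.1 = {w}) (hvw : v ≠ w) (h : Cross (simplexGraph G) a b c d) : G.Adj v w := by
  have hv' : b.1 ∆ a.1 = {v} := by rwa [symmDiff_comm]
  have hw' : d.1 ∆ c.1 = {w} := by rwa [symmDiff_comm]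
  have hvb : v ∈ b.1 ↔ v ∉ a.1 := by
    have := hv ▸ Finset.mem_singleton_self v
    rw [Finset.mem_symmDiff] at this
    tauto
  have hwd : w ∈ d.1 ↔ w ∉ c.1 := by
    have := hw ▸ Finset.mem_singleton_self w
    rw [Finset.mem_symmDiff] at this
    tauto
  rw [Cross, wset_simplexGraph hv, wset_simplexGraph hw, wset_simplexGraph hv',
    wset_simplexGraph hw'] at h
  obtain ⟨⟨t₁, h₁⟩, ⟨t₂, h₂⟩, ⟨t₃, h₃⟩, ⟨t₄, h₄⟩⟩ := h
  simp only [Set.mem_inter_iff, Set.mem_ofPred_eq, hvb, hwd] at h₁ h₂ h₃ h₄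
  obtain ⟨t, hvt, hwt⟩ : ∃ t : SimplexVertex G, v ∈ t.1 ∧ w ∈ t.1 := by
    by_cases hva : v ∈ a.1 <;> by_cases hwc : w ∈ c.1 <;>
      simp only [hva, hwc, iff_true, not_true, not_false_eq_true, iff_false] at h₁ h₂ h₃ h₄
    exacts [⟨t₁, h₁⟩, ⟨t₂, h₂⟩, ⟨t₃, h₃⟩, ⟨t₄, h₄⟩]
  exact t.2 hvt hwt hvw

lemma cross_simplexGraph_emptyClique {v w : V} (h : G.Adj v w) :
    Cross (simplexGraph G) (emptyClique G) (singletonClique G v) (emptyClique G)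
      (singletonClique G w) := by
  have hpair : G.IsClique (({v, w} : Finset V) : Set V) := by
    rw [Finset.coe_pair, isClique_pair]
    exact fun _ => h
  have hv' := symmDiff_comm (emptyClique G).1 _ ▸ symmDiff_emptyClique (G := G) v
  have hw' := symmDiff_comm (emptyClique G).1 _ ▸ symmDiff_emptyClique (G := G) w
  rw [Cross, wset_simplexGraph (symmDiff_emptyClique v),
    wset_simplexGraph (symmDiff_emptyClique w), wset_simplexGraph hv', wset_simplexGraph hw']
  refine ⟨⟨emptyClique G, ?_⟩, ⟨singletonClique G w, ?_⟩, ⟨singletonClique G v, ?_⟩,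
    ⟨⟨{v, w}, hpair⟩, ?_⟩⟩ <;> simp [emptyClique, singletonClique, h.ne, h.ne']

noncomputable def thetaClassEquiv (G : SimpleGraph V) :
    V ≃ {C : Set (Sym2 (SimplexVertex G)) //
      ∃ a b, (simplexGraph G).Adj a b ∧ C = thetaClass (simplexGraph G) a b} :=
  Equiv.ofBijective
    (fun v => ⟨thetaClass (simplexGraph G) (emptyClique G) (singletonClique G v), _, _,
      simplexGraph_adj_emptyClique v, rfl⟩)
    ⟨fun v w h => (thetaClass_simplexGraph_eq_iff (symmDiff_emptyClique v)
        (symmDiff_emptyClique w)).1 (congrArg Subtype.val h), by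
      rintro ⟨C, a, b, hab, rfl⟩
      obtain ⟨v, hv⟩ := simplexGraph_adj_iff_exists.1 hab
      exact ⟨v, Subtype.ext
        ((thetaClass_simplexGraph_eq_iff (symmDiff_emptyClique v) hv).2 rfl)⟩⟩

lemma adj_of_cross_thetaClassEquiv {v w : V} (hvw : v ≠ w)
    (h : ∃ a b c d, (simplexGraph G).Adj a b ∧ (simplexGraph G).Adj c d ∧
      (thetaClassEquiv G v).1 = thetaClass (simplexGraph G) a b ∧
      (thetaClassEquiv G w).1 = thetaClass (simplexGraph G) c d ∧
      Cross (simplexGraph G) a b c d) :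
    G.Adj v w := by
  obtain ⟨a, b, c, d, hab, hcd, hC, hD, hcross⟩ := h
  obtain ⟨v', hv⟩ := simplexGraph_adj_iff_exists.1 hab
  obtain ⟨w', hw⟩ := simplexGraph_adj_iff_exists.1 hcd
  obtain rfl := (thetaClass_simplexGraph_eq_iff (symmDiff_emptyClique v) hv).1 hC
  obtain rfl := (thetaClass_simplexGraph_eq_iff (symmDiff_emptyClique w) hw).1 hD
  exact adj_of_cross_simplexGraph hv hw hvw hcross

lemma crossingGraph_adj_thetaClassEquiv {v w : V} :
    (crossingGraph (simplexGraph G)).Adj (thetaClassEquiv G v) (thetaClassEquiv G w) ↔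
      G.Adj v w := by
  rw [crossingGraph, fromRel_adj]
  constructor
  · rintro ⟨hne, h | h⟩
    · exact adj_of_cross_thetaClassEquiv (ne_of_apply_ne _ hne) h
    · exact (adj_of_cross_thetaClassEquiv (ne_of_apply_ne _ hne.symm) h).symm
  · intro h
    exact ⟨(thetaClassEquiv G).injective.ne h.ne, Or.inl ⟨_, _, _, _,
      simplexGraph_adj_emptyClique v, simplexGraph_adj_emptyClique w, rfl, rfl,
      cross_simplexGraph_emptyClique h⟩⟩

end SimplexGraph

theorem stmt15_general {V : Type*} (G : SimpleGraph V) :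
    Nonempty (crossingGraph (simplexGraph G) ≃g G) :=
  ⟨(⟨thetaClassEquiv G, crossingGraph_adj_thetaClassEquiv⟩ : G ≃g _).symm⟩

/-- For any finite graph `G`, the crossing graph of the simplex graph of `G` is
isomorphic to `G`. -/
theorem stmt15 {V : Type*} [Fintype V] (G : SimpleGraph V) :
    Nonempty (crossingGraph (simplexGraph G) ≃g G) :=
  stmt15_general G
end
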